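/- arXiv:1908.07655 — 2 statements merged into one kernel-verified Lean document; each statement's English description precedes it below -/
import Mathlib

section
/- Let d ≥ 1 be an integer and let φ_j : (0,∞) → (0,∞) be strictly increasing and continuous with φ_j(1) = 1, satisfying c (R/r)^{β₁} ≤ φ_j(R)/φ_j(r) ≤ c' (R/r)^{β₂} for all 0 < r ≤ R ≤ 1, for some constants c, c' > 0 and 0 < β₁ ≤ β₂ < 2. Let J : ℝ^d × ℝ^d → [0,∞) be measurable and suppose there are constants C₁ > 0 and K < ∞ such that J(x,y) ≤ C₁ / ( |x-y|^d φ_j(|x-y|) ) whenever 0 < |x-y| ≤ 1, and sup_{x ∈ ℝ^d} ∫_{\{y : |x-y| ≥ 1\}} |x-y|² J(x,y) dy ≤ K. Define φ(r) = φ_j(r) for 0 < r ≤ 1 and φ(r) = r² for r > 1. Then there exists a constant c₀ > 0 such that for every x ∈ ℝ^d and every r > 0, ∫_{ℝ^d} min( |x-y|²/r², 1 ) J(x,y) dy ≤ c₀ / φ(r). -/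
/-!
Split the integral at the scales `r` and `1`. Near the diagonal (`|x - y| ≤ r`) use
`min ≤ |x-y|²/r²` together with the upper scaling of `φj`; in the intermediate range
(`r < |x - y| ≤ 1`) use `min ≤ 1` together with the lower scaling of `φj`; far away use
`min ≤ |x-y|²` and the second-moment bound. In each case the kernel is dominated by a power
`|x - y| ^ a`, and `∫ |x - y| ^ a` over a ball (when `a + d > 0`) or outside a ball
(when `a + d < 0`) is controlled by summing over dyadic annuli. For `r > 1` simply use
`min ≤ |x-y|²/r²` everywhere.
-/

open MeasureTheory Set Real Metric Module

-- The weak scaling conditions `L(β, c)` and `U(β, C)` of `φ` on `(0, 1]`.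
def LowerScaling (φ : ℝ → ℝ) (β c : ℝ) : Prop :=
  ∀ r R : ℝ, 0 < r → r ≤ R → R ≤ 1 → c * (R / r) ^ β ≤ φ R / φ r

def UpperScaling (φ : ℝ → ℝ) (β C : ℝ) : Prop :=
  ∀ r R : ℝ, 0 < r → r ≤ R → R ≤ 1 → φ R / φ r ≤ C * (R / r) ^ β

lemma LowerScaling.mul_le_one {φ : ℝ → ℝ} {β c : ℝ} (h : LowerScaling φ β c) (hc : 0 < c)
    (hβ : 0 ≤ β) (hφ₁ : φ 1 = 1) {r : ℝ} (hr : 0 < r) (hr₁ : r ≤ 1) (hφr : 0 < φ r) :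
    c * φ r ≤ 1 := by
  have := h r 1 hr hr₁ le_rfl
  rw [hφ₁, le_div_iff₀ hφr] at this
  calc c * φ r ≤ c * (1 / r) ^ β * φ r := by
        gcongr
        exact le_mul_of_one_le_right hc.le (one_le_rpow (one_le_one_div hr hr₁) hβ)
    _ ≤ 1 := this

lemma rpow_le_two_rpow_abs_mul_rpow {t ρ : ℝ} (a : ℝ) (hρ : 0 < ρ) (hρt : ρ / 2 ≤ t)
    (htρ : t ≤ ρ) : t ^ a ≤ 2 ^ |a| * ρ ^ a := by
  rcases le_or_gt 0 a with ha | ha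
  · calc t ^ a ≤ ρ ^ a := rpow_le_rpow (by linarith) htρ ha
      _ ≤ 2 ^ |a| * ρ ^ a :=
        le_mul_of_one_le_left (by positivity) (one_le_rpow one_le_two (abs_nonneg a))
  · calc t ^ a ≤ (ρ / 2) ^ a := rpow_le_rpow_of_nonpos (by positivity) hρt ha.le
      _ = 2 ^ |a| * ρ ^ a := by
        rw [div_rpow hρ.le zero_le_two, abs_of_neg ha, rpow_neg zero_le_two]; ring

lemma tsum_ofReal_mul_geometric {c q : ℝ} (hc : 0 ≤ c) (hq₀ : 0 ≤ q) (hq₁ : q < 1) :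
    ∑' k : ℕ, ENNReal.ofReal (c * q ^ k) = ENNReal.ofReal (c / (1 - q)) := by
  rw [← ENNReal.ofReal_tsum_of_nonneg (fun k => by positivity)
    ((summable_geometric_of_lt_one hq₀ hq₁).mul_left c), tsum_mul_left,
    tsum_geometric_of_lt_one hq₀ hq₁, div_eq_mul_inv]

lemma ofReal_integral_le_lintegral_ofReal {α : Type*} [MeasurableSpace α] {μ : Measure α}
    {f : α → ℝ} (hf : ∀ a, 0 ≤ f a) :
    ENNReal.ofReal (∫ a, f a ∂μ) ≤ ∫⁻ a, ENNReal.ofReal (f a) ∂μ :=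
  calc ENNReal.ofReal (∫ a, f a ∂μ) ≤ ‖∫ a, f a ∂μ‖ₑ := by
        rw [Real.enorm_eq_ofReal_abs]
        exact ENNReal.ofReal_le_ofReal (le_abs_self _)
    _ ≤ ∫⁻ a, ‖f a‖ₑ ∂μ := enorm_integral_le_lintegral_enorm f
    _ = ∫⁻ a, ENNReal.ofReal (f a) ∂μ := by simp_rw [Real.enorm_of_nonneg (hf _)]

lemma ofReal_min_sq_div_sq_mul_le {t r j : ℝ} (hj : 0 ≤ j) :
    ENNReal.ofReal (min (t ^ 2 / r ^ 2) 1 * j) ≤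
      ENNReal.ofReal (r ^ 2)⁻¹ * ENNReal.ofReal (t ^ 2 * j) := by
  rw [← ENNReal.ofReal_mul (by positivity)]
  refine ENNReal.ofReal_le_ofReal ?_
  calc min (t ^ 2 / r ^ 2) 1 * j ≤ t ^ 2 / r ^ 2 * j := by gcongr; exact min_le_left _ _
    _ = (r ^ 2)⁻¹ * (t ^ 2 * j) := by ring

lemma lintegral_far_min_sq_div_sq_mul_le {α : Type*} [PseudoMetricSpace α] [MeasurableSpace α]
    [OpensMeasurableSpace α] (μ : Measure α) {J : α → α → ℝ} {K : ℝ}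
    (hJnonneg : ∀ x y, 0 ≤ J x y)
    (hJfar : ∀ x : α, ∫⁻ y in {y | 1 ≤ dist x y},
      ENNReal.ofReal (dist x y ^ 2 * J x y) ∂μ ≤ ENNReal.ofReal K) (x : α) (r : ℝ) :
    ∫⁻ y in {y | 1 ≤ dist x y}, ENNReal.ofReal (min (dist x y ^ 2 / r ^ 2) 1 * J x y) ∂μ ≤
      ENNReal.ofReal K := by
  refine le_trans (setLIntegral_mono'
    (isClosed_le continuous_const (continuous_const.dist continuous_id)).measurableSet
    fun y hy => ?_) (hJfar x)
  exact ENNReal.ofReal_le_ofReal (mul_le_mul_of_nonneg_right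
    ((min_le_right _ _).trans (one_le_pow₀ hy)) (hJnonneg x y))

section Radial

variable {E : Type*} [NormedAddCommGroup E] [NormedSpace ℝ E] [FiniteDimensional ℝ E]
  [MeasurableSpace E] [BorelSpace E] (μ : Measure E) [μ.IsAddHaarMeasure]

lemma lintegral_annulus_rpow_le (x : E) (a : ℝ) {ρ : ℝ} (hρ : 0 < ρ) :
    ∫⁻ y in closedBall x ρ \ ball x (ρ / 2), ENNReal.ofReal (dist x y ^ a) ∂μ ≤
      ENNReal.ofReal (2 ^ |a| * μ.real (ball 0 1) * ρ ^ (a + finrank ℝ E)) := by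
  calc ∫⁻ y in closedBall x ρ \ ball x (ρ / 2), ENNReal.ofReal (dist x y ^ a) ∂μ
      ≤ ∫⁻ _ in closedBall x ρ \ ball x (ρ / 2), ENNReal.ofReal (2 ^ |a| * ρ ^ a) ∂μ := by
        refine setLIntegral_mono measurable_const fun y hy => ENNReal.ofReal_le_ofReal ?_
        rw [mem_sdiff, mem_closedBall', mem_ball', not_lt] at hy
        exact rpow_le_two_rpow_abs_mul_rpow a hρ hy.2 hy.1
    _ ≤ ENNReal.ofReal (2 ^ |a| * ρ ^ a) * μ (closedBall x ρ) := by
        rw [setLIntegral_const]; gcongr; exact sdiff_subset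
    _ = ENNReal.ofReal (2 ^ |a| * μ.real (ball 0 1) * ρ ^ (a + finrank ℝ E)) := by
        rw [μ.addHaar_closedBall x hρ.le, ← ofReal_measureReal measure_ball_lt_top.ne,
          ← ENNReal.ofReal_mul (by positivity), ← ENNReal.ofReal_mul (by positivity),
          rpow_add hρ, rpow_natCast]
        ring_nf

lemma lintegral_iUnion_annulus_rpow_le (x : E) (a : ℝ) {ρ b : ℝ} (hρ : 0 < ρ) (hb : 0 < b)
    (hb₁ : b ^ (a + finrank ℝ E) < 1) :
    ∫⁻ y in ⋃ k : ℕ, closedBall x (ρ * b ^ k) \ ball x (ρ * b ^ k / 2),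
        ENNReal.ofReal (dist x y ^ a) ∂μ ≤
      ENNReal.ofReal (2 ^ |a| * μ.real (ball 0 1) * ρ ^ (a + finrank ℝ E) /
        (1 - b ^ (a + finrank ℝ E))) := by
  calc _ ≤ ∑' k : ℕ, ∫⁻ y in closedBall x (ρ * b ^ k) \ ball x (ρ * b ^ k / 2),
          ENNReal.ofReal (dist x y ^ a) ∂μ := lintegral_iUnion_le _ _
    _ ≤ ∑' k : ℕ, ENNReal.ofReal (2 ^ |a| * μ.real (ball 0 1) * ρ ^ (a + finrank ℝ E) *
          (b ^ (a + finrank ℝ E)) ^ k) := by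
        refine ENNReal.tsum_le_tsum fun k =>
          (lintegral_annulus_rpow_le μ x a (by positivity)).trans_eq ?_
        rw [mul_rpow hρ.le (by positivity), ← rpow_natCast, ← rpow_mul hb.le, mul_comm (k : ℝ),
          rpow_mul hb.le, rpow_natCast]
        ring_nf
    _ = _ := tsum_ofReal_mul_geometric (by positivity) (by positivity) hb₁

lemma exists_lintegral_punctured_closedBall_rpow_le {a : ℝ} (ha : 0 < a + finrank ℝ E) :
    ∃ C, 0 ≤ C ∧ ∀ (x : E) (r : ℝ), 0 < r →
      ∫⁻ y in closedBall x r \ {x}, ENNReal.ofReal (dist x y ^ a) ∂μ ≤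
        ENNReal.ofReal (C * r ^ (a + finrank ℝ E)) := by
  have hq : (2⁻¹ : ℝ) ^ (a + finrank ℝ E) < 1 := rpow_lt_one (by norm_num) (by norm_num) ha
  refine ⟨2 ^ |a| * μ.real (ball 0 1) / (1 - 2⁻¹ ^ (a + finrank ℝ E)),
    div_nonneg (by positivity) (sub_nonneg.2 hq.le), fun x r hr => ?_⟩
  have hcover : closedBall x r \ {x} ⊆
      ⋃ k : ℕ, closedBall x (r * 2⁻¹ ^ k) \ ball x (r * 2⁻¹ ^ k / 2) := by
    rintro y ⟨hyr, hyx⟩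
    rw [mem_closedBall'] at hyr
    have hy : 0 < dist x y := dist_pos.2 (Ne.symm hyx)
    obtain ⟨k, hk, hk'⟩ := exists_nat_pow_near ((one_le_div hy).2 hyr) one_lt_two
    rw [le_div_iff₀ hy] at hk
    rw [div_lt_iff₀ hy, pow_succ] at hk'
    simp only [mem_iUnion, mem_sdiff, mem_closedBall', mem_ball', not_lt, inv_pow,
      ← div_eq_mul_inv, div_div]
    exact ⟨k, (le_div_iff₀ (by positivity)).2 (by linarith),
      (div_le_iff₀ (by positivity)).2 (by linarith)⟩
  calc _ ≤ _ := lintegral_mono_set hcover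
    _ ≤ _ := lintegral_iUnion_annulus_rpow_le μ x a hr (by norm_num) hq
    _ = _ := by ring_nf

lemma exists_lintegral_compl_closedBall_rpow_le {a : ℝ} (ha : a + finrank ℝ E < 0) :
    ∃ C, 0 ≤ C ∧ ∀ (x : E) (r : ℝ), 0 < r →
      ∫⁻ y in (closedBall x r)ᶜ, ENNReal.ofReal (dist x y ^ a) ∂μ ≤
        ENNReal.ofReal (C * r ^ (a + finrank ℝ E)) := by
  have hq : (2 : ℝ) ^ (a + finrank ℝ E) < 1 := rpow_lt_one_of_one_lt_of_neg one_lt_two ha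
  refine ⟨2 ^ |a| * μ.real (ball 0 1) * 2 ^ (a + finrank ℝ E) / (1 - 2 ^ (a + finrank ℝ E)),
    div_nonneg (by positivity) (sub_nonneg.2 hq.le), fun x r hr => ?_⟩
  have hcover : (closedBall x r)ᶜ ⊆
      ⋃ k : ℕ, closedBall x (2 * r * 2 ^ k) \ ball x (2 * r * 2 ^ k / 2) := by
    intro y hy
    rw [mem_compl_iff, mem_closedBall', not_le] at hy
    obtain ⟨k, hk, hk'⟩ := exists_nat_pow_near ((one_le_div hr).2 hy.le) one_lt_two
    rw [le_div_iff₀ hr] at hk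
    rw [div_lt_iff₀ hr, pow_succ] at hk'
    simp only [mem_iUnion, mem_sdiff, mem_closedBall', mem_ball', not_lt]
    exact ⟨k, by linarith, by linarith⟩
  calc _ ≤ _ := lintegral_mono_set hcover
    _ ≤ _ := lintegral_iUnion_annulus_rpow_le μ x a (by positivity) two_pos hq
    _ = _ := by rw [mul_rpow zero_le_two hr.le]; ring_nf

end Radial

section Kernel

variable {E : Type*} [NormedAddCommGroup E] [NormedSpace ℝ E] [FiniteDimensional ℝ E]
  [MeasurableSpace E] [BorelSpace E] (μ : Measure E) [μ.IsAddHaarMeasure]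
  {φj : ℝ → ℝ} {J : E → E → ℝ} {c c' β₁ β₂ C₁ K : ℝ}

lemma exists_lintegral_closedBall_sq_mul_le (hφjpos : ∀ r : ℝ, 0 < r → 0 < φj r)
    (hc' : 0 ≤ c') (hβ₂ : β₂ < 2) (hupper : UpperScaling φj β₂ c') (hC₁ : 0 ≤ C₁)
    (hJnear : ∀ x y : E, 0 < dist x y → dist x y ≤ 1 →
      J x y ≤ C₁ / (dist x y ^ finrank ℝ E * φj (dist x y))) :
    ∃ C, 0 ≤ C ∧ ∀ (x : E) (r : ℝ), 0 < r → r ≤ 1 →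
      ∫⁻ y in closedBall x r, ENNReal.ofReal (dist x y ^ 2 * J x y) ∂μ ≤
        ENNReal.ofReal (C * r ^ 2 / φj r) := by
  set d := finrank ℝ E
  obtain ⟨A, hA, hball⟩ :=
    exists_lintegral_punctured_closedBall_rpow_le μ (a := 2 - β₂ - d) (by linarith)
  refine ⟨C₁ * c' * A, by positivity, fun x r hr hr1 => ?_⟩
  have hφjr := hφjpos r hr
  set D := C₁ * c' * r ^ β₂ / φj r with hD
  have hpt : ∀ y ∈ closedBall x r \ {x}, ENNReal.ofReal (dist x y ^ 2 * J x y) ≤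
      ENNReal.ofReal D * ENNReal.ofReal (dist x y ^ (2 - β₂ - d)) := by
    rintro y ⟨hyr, hyx⟩
    rw [mem_closedBall'] at hyr
    set t := dist x y
    have ht : 0 < t := dist_pos.2 (Ne.symm hyx)
    have hφjt := hφjpos t ht
    have hinv : (φj t)⁻¹ ≤ c' * r ^ β₂ * t ^ (-β₂) / φj r := by
      calc (φj t)⁻¹ = φj r / φj t / φj r := by field_simp
        _ ≤ c' * (r / t) ^ β₂ / φj r := by gcongr; exact hupper t r ht hyr hr1
        _ = c' * r ^ β₂ * t ^ (-β₂) / φj r := by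
          rw [div_rpow hr.le ht.le, rpow_neg ht.le]; ring
    rw [← ENNReal.ofReal_mul (by positivity)]
    refine ENNReal.ofReal_le_ofReal ?_
    calc t ^ 2 * J x y ≤ t ^ 2 * (C₁ / (t ^ d * φj t)) := by
          gcongr; exact hJnear x y ht (hyr.trans hr1)
      _ = C₁ * t ^ 2 * (t ^ d)⁻¹ * (φj t)⁻¹ := by field_simp
      _ ≤ C₁ * t ^ 2 * (t ^ d)⁻¹ * (c' * r ^ β₂ * t ^ (-β₂) / φj r) := by gcongr
      _ = D * t ^ (2 - β₂ - d) := by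
        rw [hD, sub_sub, rpow_sub ht, rpow_add ht, rpow_neg ht.le, rpow_natCast, rpow_two]
        field_simp
  calc ∫⁻ y in closedBall x r, ENNReal.ofReal (dist x y ^ 2 * J x y) ∂μ
      ≤ ∫⁻ y in {x}, ENNReal.ofReal (dist x y ^ 2 * J x y) ∂μ +
          ∫⁻ y in closedBall x r \ {x}, ENNReal.ofReal (dist x y ^ 2 * J x y) ∂μ :=
        (lintegral_mono_set (by rw [union_sdiff_self]; exact subset_union_right)).trans
          (lintegral_union_le _ _ _)
    _ ≤ 0 + ∫⁻ y in closedBall x r \ {x},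
          ENNReal.ofReal D * ENNReal.ofReal (dist x y ^ (2 - β₂ - d)) ∂μ := by
        gcongr ?_ + ?_
        · simp
        · exact setLIntegral_mono' (measurableSet_closedBall.diff (measurableSet_singleton x)) hpt
    _ ≤ ENNReal.ofReal D * ENNReal.ofReal (A * r ^ (2 - β₂ - d + d)) := by
        rw [zero_add, lintegral_const_mul' _ _ ENNReal.ofReal_ne_top]
        gcongr
        exact hball x r hr
    _ = ENNReal.ofReal (C₁ * c' * A * r ^ 2 / φj r) := by
        rw [← ENNReal.ofReal_mul (by positivity), sub_add_cancel, ← rpow_natCast r 2]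
        congr 1
        rw [hD, rpow_sub hr, Nat.cast_ofNat]
        field_simp

lemma exists_lintegral_closedBall_sdiff_closedBall_le (hφjpos : ∀ r : ℝ, 0 < r → 0 < φj r)
    (hc : 0 < c) (hβ₁ : 0 < β₁) (hlower : LowerScaling φj β₁ c) (hC₁ : 0 ≤ C₁)
    (hJnear : ∀ x y : E, 0 < dist x y → dist x y ≤ 1 →
      J x y ≤ C₁ / (dist x y ^ finrank ℝ E * φj (dist x y))) :
    ∃ C, 0 ≤ C ∧ ∀ (x : E) (r : ℝ), 0 < r →
      ∫⁻ y in closedBall x 1 \ closedBall x r, ENNReal.ofReal (J x y) ∂μ ≤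
        ENNReal.ofReal (C / φj r) := by
  set d := finrank ℝ E
  obtain ⟨B, hB, hcompl⟩ :=
    exists_lintegral_compl_closedBall_rpow_le μ (a := -β₁ - d) (by linarith)
  refine ⟨C₁ * B / c, by positivity, fun x r hr => ?_⟩
  have hφjr := hφjpos r hr
  set D := C₁ * r ^ β₁ / (c * φj r) with hD
  have hpt : ∀ y ∈ closedBall x 1 \ closedBall x r, ENNReal.ofReal (J x y) ≤
      ENNReal.ofReal D * ENNReal.ofReal (dist x y ^ (-β₁ - d)) := by
    rintro y ⟨hy1, hyr⟩
    rw [mem_closedBall'] at hy1 hyr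
    rw [not_le] at hyr
    set t := dist x y
    have ht : 0 < t := hr.trans hyr
    have hφjt : c * t ^ β₁ * r ^ (-β₁) * φj r ≤ φj t := by
      have := hlower r t hr hyr.le hy1
      rwa [le_div_iff₀ hφjr, div_rpow ht.le hr.le, div_eq_mul_inv, ← rpow_neg hr.le,
        ← mul_assoc] at this
    rw [← ENNReal.ofReal_mul (by positivity)]
    refine ENNReal.ofReal_le_ofReal ?_
    calc J x y ≤ C₁ / (t ^ d * φj t) := hJnear x y ht hy1
      _ ≤ C₁ / (t ^ d * (c * t ^ β₁ * r ^ (-β₁) * φj r)) := by gcongr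
      _ = D * t ^ (-β₁ - d) := by
        rw [hD, rpow_sub ht, rpow_neg ht.le, rpow_neg hr.le, rpow_natCast]
        field_simp
  calc ∫⁻ y in closedBall x 1 \ closedBall x r, ENNReal.ofReal (J x y) ∂μ
      ≤ ∫⁻ y in closedBall x 1 \ closedBall x r,
          ENNReal.ofReal D * ENNReal.ofReal (dist x y ^ (-β₁ - d)) ∂μ :=
        setLIntegral_mono' (measurableSet_closedBall.diff measurableSet_closedBall) hpt
    _ ≤ ENNReal.ofReal D *
          ∫⁻ y in (closedBall x r)ᶜ, ENNReal.ofReal (dist x y ^ (-β₁ - d)) ∂μ := by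
        rw [lintegral_const_mul' _ _ ENNReal.ofReal_ne_top]
        gcongr
        exact sdiff_subset_compl _ _
    _ ≤ ENNReal.ofReal D * ENNReal.ofReal (B * r ^ (-β₁ - d + d)) := by
        gcongr
        exact hcompl x r hr
    _ = ENNReal.ofReal (C₁ * B / c / φj r) := by
        rw [← ENNReal.ofReal_mul (by positivity), sub_add_cancel]
        congr 1
        rw [hD, rpow_neg hr.le]
        field_simp

lemma exists_lintegral_min_sq_div_sq_mul_le_of_le_one (hφjpos : ∀ r : ℝ, 0 < r → 0 < φj r)
    (hφjone : φj 1 = 1) (hc : 0 < c) (hc' : 0 ≤ c') (hβ₁ : 0 < β₁) (hβ₂ : β₂ < 2)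
    (hlower : LowerScaling φj β₁ c) (hupper : UpperScaling φj β₂ c')
    (hC₁ : 0 ≤ C₁) (hJnonneg : ∀ x y, 0 ≤ J x y) (hJnear : ∀ x y : E, 0 < dist x y →
      dist x y ≤ 1 → J x y ≤ C₁ / (dist x y ^ finrank ℝ E * φj (dist x y)))
    (hK : 0 ≤ K) (hJfar : ∀ x : E, ∫⁻ y in {y | 1 ≤ dist x y},
      ENNReal.ofReal (dist x y ^ 2 * J x y) ∂μ ≤ ENNReal.ofReal K) :
    ∃ C, 0 ≤ C ∧ ∀ (x : E) (r : ℝ), 0 < r → r ≤ 1 →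
      ∫⁻ y, ENNReal.ofReal (min (dist x y ^ 2 / r ^ 2) 1 * J x y) ∂μ ≤
        ENNReal.ofReal (C / φj r) := by
  obtain ⟨A, hA, hnear⟩ :=
    exists_lintegral_closedBall_sq_mul_le μ hφjpos hc' hβ₂ hupper hC₁ hJnear
  obtain ⟨B, hB, hmid⟩ :=
    exists_lintegral_closedBall_sdiff_closedBall_le μ hφjpos hc hβ₁ hlower hC₁ hJnear
  refine ⟨A + B + K / c, by positivity, fun x r hr hr1 => ?_⟩
  have hφjr := hφjpos r hr
  have hcφjr := hlower.mul_le_one hc hβ₁.le hφjone hr hr1 hφjr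
  set f := fun y => ENNReal.ofReal (min (dist x y ^ 2 / r ^ 2) 1 * J x y)
  have hcover : (univ : Set E) ⊆
      closedBall x r ∪ (closedBall x 1 \ closedBall x r) ∪ {y | 1 ≤ dist x y} := by
    intro y _
    rw [union_sdiff_cancel (closedBall_subset_closedBall hr1)]
    rcases le_or_gt (dist x y) 1 with h | h
    · exact Or.inl (mem_closedBall'.2 h)
    · exact Or.inr h.le
  have hnear' : ∫⁻ y in closedBall x r, f y ∂μ ≤ ENNReal.ofReal (A / φj r) :=
    calc ∫⁻ y in closedBall x r, f y ∂μ
        ≤ ∫⁻ y in closedBall x r,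
            ENNReal.ofReal (r ^ 2)⁻¹ * ENNReal.ofReal (dist x y ^ 2 * J x y) ∂μ :=
          lintegral_mono fun y => ofReal_min_sq_div_sq_mul_le (hJnonneg x y)
      _ ≤ ENNReal.ofReal (r ^ 2)⁻¹ * ENNReal.ofReal (A * r ^ 2 / φj r) := by
          rw [lintegral_const_mul' _ _ ENNReal.ofReal_ne_top]
          gcongr
          exact hnear x r hr hr1
      _ = ENNReal.ofReal (A / φj r) := by
          rw [← ENNReal.ofReal_mul (by positivity)]
          congr 1
          field_simp
  have hmid' : ∫⁻ y in closedBall x 1 \ closedBall x r, f y ∂μ ≤ ENNReal.ofReal (B / φj r) :=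
    (lintegral_mono fun y => ENNReal.ofReal_le_ofReal
      (mul_le_of_le_one_left (hJnonneg x y) (min_le_right _ _))).trans (hmid x r hr)
  have hfar' : ∫⁻ y in {y | 1 ≤ dist x y}, f y ∂μ ≤ ENNReal.ofReal (K / c / φj r) := by
    refine (lintegral_far_min_sq_div_sq_mul_le μ hJnonneg hJfar x r).trans
      (ENNReal.ofReal_le_ofReal ?_)
    rw [div_div, le_div_iff₀ (by positivity)]
    nlinarith
  calc ∫⁻ y, f y ∂μ
      ≤ ∫⁻ y in closedBall x r ∪ (closedBall x 1 \ closedBall x r) ∪ {y | 1 ≤ dist x y},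
          f y ∂μ := by
        rw [← setLIntegral_univ]
        exact lintegral_mono_set hcover
    _ ≤ ∫⁻ y in closedBall x r, f y ∂μ + ∫⁻ y in closedBall x 1 \ closedBall x r, f y ∂μ +
          ∫⁻ y in {y | 1 ≤ dist x y}, f y ∂μ :=
        (lintegral_union_le _ _ _).trans (add_le_add_left (lintegral_union_le _ _ _) _)
    _ ≤ ENNReal.ofReal (A / φj r) + ENNReal.ofReal (B / φj r) +
          ENNReal.ofReal (K / c / φj r) := by
        gcongr
    _ = ENNReal.ofReal ((A + B + K / c) / φj r) := by
        rw [← ENNReal.ofReal_add (by positivity) (by positivity),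
          ← ENNReal.ofReal_add (by positivity) (by positivity), add_div, add_div]

lemma exists_lintegral_min_sq_div_sq_mul_le_of_one_lt (hφjpos : ∀ r : ℝ, 0 < r → 0 < φj r)
    (hφjone : φj 1 = 1) (hc' : 0 ≤ c') (hβ₂ : β₂ < 2) (hupper : UpperScaling φj β₂ c')
    (hC₁ : 0 ≤ C₁) (hJnonneg : ∀ x y, 0 ≤ J x y) (hJnear : ∀ x y : E, 0 < dist x y →
      dist x y ≤ 1 → J x y ≤ C₁ / (dist x y ^ finrank ℝ E * φj (dist x y)))
    (hK : 0 ≤ K) (hJfar : ∀ x : E, ∫⁻ y in {y | 1 ≤ dist x y},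
      ENNReal.ofReal (dist x y ^ 2 * J x y) ∂μ ≤ ENNReal.ofReal K) :
    ∃ C, 0 ≤ C ∧ ∀ (x : E) (r : ℝ), 1 < r →
      ∫⁻ y, ENNReal.ofReal (min (dist x y ^ 2 / r ^ 2) 1 * J x y) ∂μ ≤
        ENNReal.ofReal (C / r ^ 2) := by
  obtain ⟨A, hA, hnear⟩ :=
    exists_lintegral_closedBall_sq_mul_le μ hφjpos hc' hβ₂ hupper hC₁ hJnear
  refine ⟨A + K, by positivity, fun x r hr => ?_⟩
  have hmoment : ∫⁻ y, ENNReal.ofReal (dist x y ^ 2 * J x y) ∂μ ≤ ENNReal.ofReal (A + K) :=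
    calc ∫⁻ y, ENNReal.ofReal (dist x y ^ 2 * J x y) ∂μ
        ≤ ∫⁻ y in closedBall x 1 ∪ {y | 1 ≤ dist x y},
            ENNReal.ofReal (dist x y ^ 2 * J x y) ∂μ := by
          rw [← setLIntegral_univ]
          refine lintegral_mono_set fun y _ => ?_
          rcases le_total (dist x y) 1 with h | h
          · exact Or.inl (mem_closedBall'.2 h)
          · exact Or.inr h
      _ ≤ ENNReal.ofReal (A * 1 ^ 2 / φj 1) + ENNReal.ofReal K :=
          (lintegral_union_le _ _ _).trans (add_le_add (hnear x 1 one_pos le_rfl) (hJfar x))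
      _ = ENNReal.ofReal (A + K) := by
          rw [hφjone, one_pow, mul_one, div_one, ENNReal.ofReal_add hA hK]
  calc ∫⁻ y, ENNReal.ofReal (min (dist x y ^ 2 / r ^ 2) 1 * J x y) ∂μ
      ≤ ∫⁻ y, ENNReal.ofReal (r ^ 2)⁻¹ * ENNReal.ofReal (dist x y ^ 2 * J x y) ∂μ :=
        lintegral_mono fun y => ofReal_min_sq_div_sq_mul_le (hJnonneg x y)
    _ ≤ ENNReal.ofReal (r ^ 2)⁻¹ * ENNReal.ofReal (A + K) := by
        rw [lintegral_const_mul' _ _ ENNReal.ofReal_ne_top]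
        gcongr
    _ = ENNReal.ofReal ((A + K) / r ^ 2) := by
        rw [← ENNReal.ofReal_mul (by positivity), inv_mul_eq_div]

end Kernel

theorem stmt_17_general (n : ℕ)
    (φj : ℝ → ℝ) (hφjpos : ∀ r : ℝ, 0 < r → 0 < φj r)
    (hφjone : φj 1 = 1)
    (c c' β₁ β₂ : ℝ) (hc : 0 < c) (hc' : 0 < c')
    (hβ₁ : 0 < β₁) (hβ₂ : β₂ < 2)
    (hscale : ∀ r R : ℝ, 0 < r → r ≤ R → R ≤ 1 →
      c * (R / r) ^ β₁ ≤ φj R / φj r ∧ φj R / φj r ≤ c' * (R / r) ^ β₂)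
    (J : EuclideanSpace ℝ (Fin n) → EuclideanSpace ℝ (Fin n) → ℝ)
    (hJnonneg : ∀ x y, 0 ≤ J x y)
    (C₁ K : ℝ) (hC₁ : 0 < C₁)
    (hJnear : ∀ x y : EuclideanSpace ℝ (Fin n), 0 < dist x y → dist x y ≤ 1 →
      J x y ≤ C₁ / (dist x y ^ n * φj (dist x y)))
    (hJfar : ∀ x : EuclideanSpace ℝ (Fin n),
      (∫⁻ y in {y : EuclideanSpace ℝ (Fin n) | 1 ≤ dist x y},
        ENNReal.ofReal (dist x y ^ 2 * J x y)) ≤ ENNReal.ofReal K)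
    (φ : ℝ → ℝ)
    (hφ₁ : ∀ r : ℝ, 0 < r → r ≤ 1 → φ r = φj r)
    (hφ₂ : ∀ r : ℝ, 1 < r → φ r = r ^ 2) :
    ∃ c₀ : ℝ, 0 < c₀ ∧ ∀ (x : EuclideanSpace ℝ (Fin n)) (r : ℝ), 0 < r →
      (∫ y, min (dist x y ^ 2 / r ^ 2) 1 * J x y) ≤ c₀ / φ r := by
  have hlower : LowerScaling φj β₁ c := fun r R h₀ h₁ h₂ => (hscale r R h₀ h₁ h₂).1
  have hupper : UpperScaling φj β₂ c' := fun r R h₀ h₁ h₂ => (hscale r R h₀ h₁ h₂).2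
  have hJnear' : ∀ x y : EuclideanSpace ℝ (Fin n), 0 < dist x y → dist x y ≤ 1 →
      J x y ≤ C₁ / (dist x y ^ finrank ℝ (EuclideanSpace ℝ (Fin n)) * φj (dist x y)) := by
    rwa [finrank_euclideanSpace_fin]
  have hJfar' x := (hJfar x).trans (ENNReal.ofReal_le_ofReal (le_max_left K 0))
  obtain ⟨Cs, hCs, hsmall⟩ := exists_lintegral_min_sq_div_sq_mul_le_of_le_one volume hφjpos
    hφjone hc hc'.le hβ₁ hβ₂ hlower hupper hC₁.le hJnonneg hJnear' (le_max_right K 0) hJfar'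
  obtain ⟨Cl, hCl, hlarge⟩ := exists_lintegral_min_sq_div_sq_mul_le_of_one_lt volume hφjpos
    hφjone hc'.le hβ₂ hupper hC₁.le hJnonneg hJnear' (le_max_right K 0) hJfar'
  refine ⟨Cs + Cl + 1, by positivity, fun x r hr => ?_⟩
  have hintegral := ofReal_integral_le_lintegral_ofReal (μ := volume)
    (f := fun y => min (dist x y ^ 2 / r ^ 2) 1 * J x y)
    fun y => mul_nonneg (le_min (by positivity) zero_le_one) (hJnonneg x y)
  rcases le_or_gt r 1 with hr1 | hr1
  · have hφjr := hφjpos r hr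
    rw [hφ₁ r hr hr1, ← ENNReal.ofReal_le_ofReal_iff (by positivity)]
    exact hintegral.trans ((hsmall x r hr hr1).trans
      (ENNReal.ofReal_le_ofReal (by gcongr; linarith)))
  · rw [hφ₂ r hr1, ← ENNReal.ofReal_le_ofReal_iff (by positivity)]
    exact hintegral.trans ((hlarge x r hr1).trans
      (ENNReal.ofReal_le_ofReal (by gcongr; linarith)))

/-- Example 5.3: the CSJ-type bound
`∫ min(|x-y|²/r², 1) J(x,y) dy ≤ c₀/φ(r)` on `ℝ^d` for a jumping kernel with
mixed-scaling small jumps and a finite second moment for large jumps. -/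
theorem stmt_17 (n : ℕ) (hn : 1 ≤ n)
    (φj : ℝ → ℝ) (hφjpos : ∀ r : ℝ, 0 < r → 0 < φj r)
    (hφjmono : StrictMonoOn φj (Ioi 0)) (hφjcont : ContinuousOn φj (Ioi 0))
    (hφjone : φj 1 = 1)
    (c c' β₁ β₂ : ℝ) (hc : 0 < c) (hc' : 0 < c')
    (hβ₁ : 0 < β₁) (hβ₁₂ : β₁ ≤ β₂) (hβ₂ : β₂ < 2)
    (hscale : ∀ r R : ℝ, 0 < r → r ≤ R → R ≤ 1 →
      c * (R / r) ^ β₁ ≤ φj R / φj r ∧ φj R / φj r ≤ c' * (R / r) ^ β₂)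
    (J : EuclideanSpace ℝ (Fin n) → EuclideanSpace ℝ (Fin n) → ℝ)
    (hJmeas : Measurable (Function.uncurry J)) (hJnonneg : ∀ x y, 0 ≤ J x y)
    (C₁ K : ℝ) (hC₁ : 0 < C₁)
    (hJnear : ∀ x y : EuclideanSpace ℝ (Fin n), 0 < dist x y → dist x y ≤ 1 →
      J x y ≤ C₁ / (dist x y ^ n * φj (dist x y)))
    (hJfar : ∀ x : EuclideanSpace ℝ (Fin n),
      (∫⁻ y in {y : EuclideanSpace ℝ (Fin n) | 1 ≤ dist x y},
        ENNReal.ofReal (dist x y ^ 2 * J x y)) ≤ ENNReal.ofReal K)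
    (φ : ℝ → ℝ)
    (hφ₁ : ∀ r : ℝ, 0 < r → r ≤ 1 → φ r = φj r)
    (hφ₂ : ∀ r : ℝ, 1 < r → φ r = r ^ 2) :
    ∃ c₀ : ℝ, 0 < c₀ ∧ ∀ (x : EuclideanSpace ℝ (Fin n)) (r : ℝ), 0 < r →
      (∫ y, min (dist x y ^ 2 / r ^ 2) 1 * J x y) ≤ c₀ / φ r :=
  stmt_17_general n φj hφjpos hφjone c c' β₁ β₂ hc hc' hβ₁ hβ₂ hscale J hJnonneg C₁ K hC₁ hJnear
    hJfar φ hφ₁ hφ₂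
end

section
/- Let (M,d) be a metric space and μ a Borel measure on M such that V(x,r) := μ(B(x,r)) is finite and strictly positive for all x ∈ M and r > 0, and suppose there exist constants C_μ > 0 and d₂ > 0 such that V(x,R)/V(x,r) ≤ C_μ (R/r)^{d₂} for all x ∈ M and 0 < r ≤ R. Let φ_c : [0,∞) → [0,∞) be a strictly increasing continuous bijection satisfying c₁ (R/r)^{β₁} ≤ φ_c(R)/φ_c(r) ≤ c₂ (R/r)^{β₂} for all 0 < r ≤ R, with constants c₁, c₂ > 0 and 1 < β₁ ≤ β₂. Let ψ : [0,∞) → [0,∞) be a strictly increasing bijection with a^{-1} φ_c(r)/r ≤ ψ(r) ≤ a φ_c(r)/r for all r > 0, for some a ≥ 1. Then for every real k ≥ 1 there exists a constant c(k) > 0 such that for all t > 0 and all x, y ∈ M with d(x,y) ≥ φ_c^{-1}(t), (1/V(x, φ_c^{-1}(t))) · exp( - d(x,y)/ψ^{-1}(t/d(x,y)) ) ≤ c(k) · t^k / ( V(x, d(x,y)) · φ_c(d(x,y))^k ). -/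
/-!
Put `r = d(x,y)`, `ρ = φ_c⁻¹(t)`, `s = ψ⁻¹(t/r)` and `Q = φ_c(r)/t`. Volume doubling together with
the lower scaling of `φ_c` gives `V(x,r)/V(x,ρ) ≲ Q^{d₂/β₁}`, while `ψ(s) = t/r` and `ψ ≍ φ_c(r)/r`
give `Q ≲ (φ_c(r)/r)/(φ_c(s)/s) ≲ max(r/s, 1)^{β₂-1}`. So `V(x,r)/V(x,ρ) · Q^k` is bounded by a
power of `max(r/s, 1)`, hence by a constant times `exp(r/s)`.
-/

open MeasureTheory Set Real Metric

lemma rpow_le_div_exp_one_rpow_mul_exp {p v : ℝ} (hp : 0 < p) (hv : 0 ≤ v) :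
    v ^ p ≤ (p / exp 1) ^ p * exp v := by
  -- raise `v / p ≤ exp (v / p - 1)` to the power `p`
  have hexp : v / p ≤ exp (v / p - 1) := by linarith [add_one_le_exp (v / p - 1)]
  calc v ^ p = p ^ p * (v / p) ^ p := by
        rw [div_rpow hv hp.le, mul_div_cancel₀ _ (rpow_pos_of_pos hp p).ne']
    _ ≤ p ^ p * exp (v / p - 1) ^ p := by gcongr
    _ = (p / exp 1) ^ p * exp v := by
        rw [← exp_mul, sub_mul, div_mul_cancel₀ _ hp.ne', one_mul, exp_sub,
          div_rpow hp.le (exp_pos 1).le, ← exp_one_rpow p]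
        ring

lemma rpow_le_mul_exp_of_le_mul_max_rpow {Q K u m γ : ℝ} (hQ : 0 ≤ Q) (hK : 0 ≤ K) (hu : 0 ≤ u)
    (hm : 0 < m) (hγ : 0 < γ) (h : Q ≤ K * max u 1 ^ γ) :
    Q ^ m ≤ K ^ m * ((m * γ) / exp 1) ^ (m * γ) * exp 1 * exp u := by
  have hw : 0 < max u 1 := lt_max_of_lt_right one_pos
  calc Q ^ m ≤ (K * max u 1 ^ γ) ^ m := by gcongr
    _ = K ^ m * max u 1 ^ (m * γ) := by
        rw [mul_rpow hK (rpow_nonneg hw.le _), ← rpow_mul hw.le, mul_comm γ]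
    _ ≤ K ^ m * (((m * γ) / exp 1) ^ (m * γ) * exp (max u 1)) := by
        gcongr
        exact rpow_le_div_exp_one_rpow_mul_exp (mul_pos hm hγ) hw.le
    _ ≤ K ^ m * (((m * γ) / exp 1) ^ (m * γ) * exp (u + 1)) := by
        gcongr
        exact max_le (by linarith) (by linarith)
    _ = K ^ m * ((m * γ) / exp 1) ^ (m * γ) * exp 1 * exp u := by
        rw [exp_add]; ring

lemma rpow_le_div_rpow_div_of_mul_rpow_le {x c β d Q : ℝ} (hx : 0 ≤ x) (hc : 0 < c)
    (hβ : 0 < β) (hd : 0 ≤ d) (h : c * x ^ β ≤ Q) : x ^ d ≤ (Q / c) ^ (d / β) := by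
  calc x ^ d = (x ^ β) ^ (d / β) := by rw [← rpow_mul hx, mul_div_cancel₀ _ hβ.ne']
    _ ≤ (Q / c) ^ (d / β) := by
        gcongr
        rwa [le_div_iff₀' hc]

def HasScaleBounds (φ : ℝ → ℝ) (c₁ c₂ β₁ β₂ : ℝ) : Prop :=
  ∀ r R : ℝ, 0 < r → r ≤ R → c₁ * (R / r) ^ β₁ ≤ φ R / φ r ∧ φ R / φ r ≤ c₂ * (R / r) ^ β₂

lemma HasScaleBounds.div_le_mul_max_rpow_mul_div {φ : ℝ → ℝ} {c₁ c₂ β₁ β₂ r s : ℝ}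
    (hφ : HasScaleBounds φ c₁ c₂ β₁ β₂) (hpos : ∀ r, 0 < r → 0 < φ r) (hc₁ : 0 < c₁)
    (hβ₁ : 1 ≤ β₁) (hr : 0 < r) (hs : 0 < s) :
    φ r / r ≤ max c₂ c₁⁻¹ * max (r / s) 1 ^ (β₂ - 1) * (φ s / s) := by
  have hφr := hpos r hr
  have hφs := hpos s hs
  have hsplit : φ r / r = φ r / φ s * (s / r) * (φ s / s) := by field_simp
  rw [hsplit]
  refine mul_le_mul_of_nonneg_right ?_ (div_pos hφs hs).le
  rcases le_or_gt s r with hsr | hrs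
  · have hx : 0 < r / s := div_pos hr hs
    calc φ r / φ s * (s / r) ≤ c₂ * (r / s) ^ β₂ * (r / s) ^ (-1 : ℝ) := by
          rw [rpow_neg_one, inv_div]
          gcongr
          exact (hφ s r hs hsr).2
      _ = c₂ * (r / s) ^ (β₂ - 1) := by rw [mul_assoc, ← rpow_add hx, sub_eq_add_neg]
      _ ≤ max c₂ c₁⁻¹ * max (r / s) 1 ^ (β₂ - 1) := by
          rw [max_eq_left ((one_le_div hs).mpr hsr)]
          gcongr
          exact le_max_left _ _
  · have hx : 1 ≤ s / r := (one_le_div hr).mpr hrs.le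
    have hlow : c₁ * (s / r) ^ β₁ ≤ φ s / φ r := (hφ r s hr hrs.le).1
    calc φ r / φ s * (s / r) ≤ c₁⁻¹ * (s / r) ^ (1 - β₁) := by
          have hinv : φ r / φ s ≤ (c₁ * (s / r) ^ β₁)⁻¹ := by
            rw [← inv_div]; exact inv_anti₀ (by positivity) hlow
          rw [rpow_sub (by linarith), rpow_one]
          calc φ r / φ s * (s / r) ≤ (c₁ * (s / r) ^ β₁)⁻¹ * (s / r) := by gcongr
            _ = c₁⁻¹ * (s / r / (s / r) ^ β₁) := by ring
      _ ≤ c₁⁻¹ :=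
          mul_le_of_le_one_right (by positivity) (rpow_le_one_of_one_le_of_nonpos hx (by linarith))
      _ ≤ max c₂ c₁⁻¹ * max (r / s) 1 ^ (β₂ - 1) := by
          rw [max_eq_right ((div_le_one hs).mpr hrs.le), one_rpow, mul_one]
          exact le_max_right _ _

lemma HasScaleBounds.div_le_mul_max_rpow {φ : ℝ → ℝ} {c₁ c₂ β₁ β₂ a r s t : ℝ}
    (hφ : HasScaleBounds φ c₁ c₂ β₁ β₂) (hpos : ∀ r, 0 < r → 0 < φ r) (hc₁ : 0 < c₁)
    (hβ₁ : 1 ≤ β₁) (ha : 0 < a) (hr : 0 < r) (hs : 0 < s) (ht : 0 < t)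
    (hst : a⁻¹ * (φ s / s) ≤ t / r) :
    φ r / t ≤ a * max c₂ c₁⁻¹ * max (r / s) 1 ^ (β₂ - 1) := by
  have htr : 0 < t / r := div_pos ht hr
  rw [inv_mul_le_iff₀ ha] at hst
  calc φ r / t = (φ r / r) / (t / r) := (div_div_div_cancel_right₀ hr.ne' _ _).symm
    _ ≤ max c₂ c₁⁻¹ * max (r / s) 1 ^ (β₂ - 1) * (φ s / s) / (t / r) := by
        gcongr
        exact hφ.div_le_mul_max_rpow_mul_div hpos hc₁ hβ₁ hr hs
    _ ≤ max c₂ c₁⁻¹ * max (r / s) 1 ^ (β₂ - 1) * (a * (t / r)) / (t / r) := by gcongr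
    _ = a * max c₂ c₁⁻¹ * max (r / s) 1 ^ (β₂ - 1) := by
        rw [mul_div_assoc, mul_div_cancel_right₀ _ htr.ne']; ring

lemma pos_of_map_zero_of_apply_eq {f : ℝ → ℝ} {x t : ℝ} (hf0 : f 0 = 0) (hx : 0 ≤ x)
    (hfx : f x = t) (ht : 0 < t) : 0 < x := by
  refine hx.lt_of_ne ?_
  rintro rfl
  rw [hf0] at hfx
  exact ht.ne hfx

lemma one_div_mul_exp_neg_le_of_le {Vρ Vr t φr u C k : ℝ} (hVρ : 0 < Vρ) (hVr : 0 < Vr)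
    (ht : 0 < t) (hφr : 0 < φr) (h : Vr / Vρ * (φr / t) ^ k ≤ C * exp u) :
    1 / Vρ * exp (-u) ≤ C * t ^ k / (Vr * φr ^ k) := by
  rw [div_rpow hφr.le ht.le] at h
  have htk := rpow_pos_of_pos ht k
  rw [exp_neg, le_div_iff₀ (by positivity)]
  calc 1 / Vρ * (exp u)⁻¹ * (Vr * φr ^ k)
        = Vr / Vρ * (φr ^ k / t ^ k) * t ^ k * (exp u)⁻¹ := by field_simp
    _ ≤ C * exp u * t ^ k * (exp u)⁻¹ := by gcongr
    _ = C * t ^ k := by field_simp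

theorem stmt_18_general {M : Type*} [MetricSpace M] [MeasurableSpace M]
    (μ : Measure M) (V : M → ℝ → ℝ)
    (hV : ∀ x r, V x r = (μ (ball x r)).toReal)
    (hfin : ∀ (x : M) (r : ℝ), 0 < r → μ (ball x r) < ⊤)
    (hpos : ∀ (x : M) (r : ℝ), 0 < r → 0 < μ (ball x r))
    (Cμ d₂ : ℝ) (hCμ : 0 < Cμ) (hd₂ : 0 < d₂)
    (hVD : ∀ (x : M) (r R : ℝ), 0 < r → r ≤ R → V x R / V x r ≤ Cμ * (R / r) ^ d₂)
    (φc φcInv : ℝ → ℝ) (hφc0 : φc 0 = 0)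
    (hφcMono : StrictMonoOn φc (Ici 0)) (hφcInv_nonneg : ∀ t : ℝ, 0 ≤ t → 0 ≤ φcInv t)
    (hφcInv_right : ∀ t : ℝ, 0 ≤ t → φc (φcInv t) = t)
    (c₁ c₂ β₁ β₂ : ℝ) (hc₁ : 0 < c₁) (hβ₁ : 1 < β₁) (hβ₁₂ : β₁ ≤ β₂)
    (hφcScale : ∀ r R : ℝ, 0 < r → r ≤ R →
      c₁ * (R / r) ^ β₁ ≤ φc R / φc r ∧ φc R / φc r ≤ c₂ * (R / r) ^ β₂)
    (ψ ψInv : ℝ → ℝ) (a : ℝ) (ha : 1 ≤ a)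
    (hψ0 : ψ 0 = 0)
    (hψInv_nonneg : ∀ t : ℝ, 0 ≤ t → 0 ≤ ψInv t)
    (hψInv_right : ∀ t : ℝ, 0 ≤ t → ψ (ψInv t) = t)
    (hψcomp : ∀ r : ℝ, 0 < r → a⁻¹ * (φc r / r) ≤ ψ r ∧ ψ r ≤ a * (φc r / r)) :
    ∀ k : ℝ, 1 ≤ k → ∃ c : ℝ, 0 < c ∧ ∀ (t : ℝ) (x y : M), 0 < t →
      φcInv t ≤ dist x y →
      (1 / V x (φcInv t)) * Real.exp (-(dist x y / ψInv (t / dist x y))) ≤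
        c * t ^ k / (V x (dist x y) * φc (dist x y) ^ k) := by
  intro k hk
  set K := a * max c₂ c₁⁻¹
  set m := d₂ / β₁ + k
  set γ := β₂ - 1
  have hK : 0 < K := by positivity
  have hm : 0 < m := by positivity
  have hγ : 0 < γ := by linarith
  refine ⟨Cμ * c₁ ^ (-(d₂ / β₁)) * (K ^ m * ((m * γ) / exp 1) ^ (m * γ) * exp 1), by positivity,
    fun t x y ht hd => ?_⟩
  set r := dist x y
  set ρ := φcInv t
  have hφpos : ∀ r, 0 < r → 0 < φc r := fun r hr => by
    simpa [hφc0] using hφcMono (mem_Ici.mpr le_rfl) (mem_Ici.mpr hr.le) hr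
  have hVpos : ∀ R, 0 < R → 0 < V x R := fun R hR => by
    rw [hV]; exact ENNReal.toReal_pos (hpos x R hR).ne' (hfin x R hR).ne
  have hρ : 0 < ρ :=
    pos_of_map_zero_of_apply_eq hφc0 (hφcInv_nonneg t ht.le) (hφcInv_right t ht.le) ht
  have hr : 0 < r := hρ.trans_le hd
  have htr : 0 < t / r := div_pos ht hr
  set s := ψInv (t / r)
  have hs : 0 < s :=
    pos_of_map_zero_of_apply_eq hψ0 (hψInv_nonneg _ htr.le) (hψInv_right _ htr.le) htr
  set Q := φc r / t
  have hQ : Q ≤ K * max (r / s) 1 ^ γ :=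
    HasScaleBounds.div_le_mul_max_rpow hφcScale hφpos hc₁ hβ₁.le (by linarith) hr hs ht
      (by simpa [s, hψInv_right _ htr.le] using (hψcomp s hs).1)
  have hvol : V x r / V x ρ ≤ Cμ * (Q / c₁) ^ (d₂ / β₁) := by
    refine (hVD x ρ r hρ hd).trans ?_
    gcongr
    refine rpow_le_div_rpow_div_of_mul_rpow_le (div_pos hr hρ).le hc₁ (by linarith) hd₂.le ?_
    simpa [ρ, hφcInv_right t ht.le] using (hφcScale ρ r hρ hd).1
  have hQ0 : 0 < Q := div_pos (hφpos r hr) ht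
  refine one_div_mul_exp_neg_le_of_le (hVpos ρ hρ) (hVpos r hr) ht (hφpos r hr) ?_
  calc V x r / V x ρ * Q ^ k ≤ Cμ * (Q / c₁) ^ (d₂ / β₁) * Q ^ k := by gcongr
    _ = Cμ * c₁ ^ (-(d₂ / β₁)) * Q ^ m := by
        rw [div_rpow hQ0.le hc₁.le, rpow_neg hc₁.le, rpow_add hQ0]; ring
    _ ≤ _ := by
        rw [mul_assoc _ _ (exp _)]
        gcongr
        exact rpow_le_mul_exp_of_le_mul_max_rpow hQ0.le hK.le (div_pos hr hs).le hm hγ hQ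

/-- estimate (1.27): for `d(x,y) ≥ φ_c⁻¹(t)`, the sub-Gaussian term
`(1/V(x,φ_c⁻¹(t))) exp(-d(x,y)/ψ⁻¹(t/d(x,y)))` is bounded by
`c(k) t^k/(V(x,d(x,y)) φ_c(d(x,y))^k)` for every `k ≥ 1`. -/
theorem stmt_18 {M : Type*} [MetricSpace M] [MeasurableSpace M] [BorelSpace M]
    (μ : Measure M) (V : M → ℝ → ℝ)
    (hV : ∀ x r, V x r = (μ (ball x r)).toReal)
    (hfin : ∀ (x : M) (r : ℝ), 0 < r → μ (ball x r) < ⊤)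
    (hpos : ∀ (x : M) (r : ℝ), 0 < r → 0 < μ (ball x r))
    (Cμ d₂ : ℝ) (hCμ : 0 < Cμ) (hd₂ : 0 < d₂)
    (hVD : ∀ (x : M) (r R : ℝ), 0 < r → r ≤ R → V x R / V x r ≤ Cμ * (R / r) ^ d₂)
    (φc φcInv : ℝ → ℝ) (hφc0 : φc 0 = 0)
    (hφcMono : StrictMonoOn φc (Ici 0)) (hφcCont : ContinuousOn φc (Ici 0))
    (hφcInv_nonneg : ∀ t : ℝ, 0 ≤ t → 0 ≤ φcInv t)
    (hφcInv_left : ∀ r : ℝ, 0 ≤ r → φcInv (φc r) = r)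
    (hφcInv_right : ∀ t : ℝ, 0 ≤ t → φc (φcInv t) = t)
    (c₁ c₂ β₁ β₂ : ℝ) (hc₁ : 0 < c₁) (hc₂ : 0 < c₂) (hβ₁ : 1 < β₁) (hβ₁₂ : β₁ ≤ β₂)
    (hφcScale : ∀ r R : ℝ, 0 < r → r ≤ R →
      c₁ * (R / r) ^ β₁ ≤ φc R / φc r ∧ φc R / φc r ≤ c₂ * (R / r) ^ β₂)
    (ψ ψInv : ℝ → ℝ) (a : ℝ) (ha : 1 ≤ a)
    (hψ0 : ψ 0 = 0) (hψMono : StrictMonoOn ψ (Ici 0))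
    (hψInv_nonneg : ∀ t : ℝ, 0 ≤ t → 0 ≤ ψInv t)
    (hψInv_left : ∀ r : ℝ, 0 ≤ r → ψInv (ψ r) = r)
    (hψInv_right : ∀ t : ℝ, 0 ≤ t → ψ (ψInv t) = t)
    (hψcomp : ∀ r : ℝ, 0 < r → a⁻¹ * (φc r / r) ≤ ψ r ∧ ψ r ≤ a * (φc r / r)) :
    ∀ k : ℝ, 1 ≤ k → ∃ c : ℝ, 0 < c ∧ ∀ (t : ℝ) (x y : M), 0 < t →
      φcInv t ≤ dist x y →
      (1 / V x (φcInv t)) * Real.exp (-(dist x y / ψInv (t / dist x y))) ≤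
        c * t ^ k / (V x (dist x y) * φc (dist x y) ^ k) :=
  stmt_18_general μ V hV hfin hpos Cμ d₂ hCμ hd₂ hVD φc φcInv hφc0 hφcMono hφcInv_nonneg
    hφcInv_right c₁ c₂ β₁ β₂ hc₁ hβ₁ hβ₁₂ hφcScale ψ ψInv a ha hψ0 hψInv_nonneg hψInv_right hψcomp
end
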